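/- arXiv:2102.08571 — 2 statements merged into one kernel-verified Lean document; each statement's English description precedes it below -/
import Mathlib

section
/- The fixed point of the optimized-lookahead operator is the optimal self-triggered cost over stationary policies: if V_st is the unique fixed point of T_O, then for every x ∈ X, V_st(x) equals the infimum over all stationary self-triggering policies μ = (π, τ) of f^μ(x), where f^μ is the unique fixed point of T_μ; moreover this infimum is attained by some stationary self-triggering policy. -/
open scoped BigOperators

/-- Expectation of `f` under a probability mass function `p` on a finite type. -/
noncomputable def expect {X : Type*} [Fintype X] (p : PMF X) (f : X → ℝ) : ℝ :=
  ∑ y, (p y).toReal * f y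

/-- The classic Bellman operator `(T v)(x) = min_a ( c(x,a) + β · E_{y∼P(x,a)}[v(y)] )`. -/
noncomputable def bellman {X A : Type*} [Fintype X] [Fintype A]
    (P : X → A → PMF X) (c : X × A → ℝ) (β : ℝ) (v : X → ℝ) : X → ℝ :=
  fun x => ⨅ a : A, (c (x, a) + β * expect (P x a) v)

/-- The skip kernel: distribution of the state after `t` steps from `x`, holding action `a`. -/
noncomputable def skip {X A : Type*} (P : X → A → PMF X) (x : X) (a : A) : ℕ → PMF X
  | 0 => PMF.pure x
  | t + 1 => (skip P x a t).bind fun y => P y a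

/-- The consolidated cost `c̄(x,a,Δt) = ∑_{t=0}^{Δt−1} β^t · E_{y∼P̄(x,a,t)}[c(y,a)]`. -/
noncomputable def cbar {X A : Type*} [Fintype X]
    (P : X → A → PMF X) (c : X × A → ℝ) (β : ℝ) (x : X) (a : A) (Δt : ℕ) : ℝ :=
  ∑ t ∈ Finset.range Δt, β ^ t * expect (skip P x a t) (fun y => c (y, a))

/-- The optimized-lookahead Bellman operator
`(T_O v)(x) = min_{a, 1 ≤ Δt ≤ T̄} ( c̄(x,a,Δt) + β^Δt ( O + E_{y∼P̄(x,a,Δt)}[v(y)] ) )`. -/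
noncomputable def TO {X A : Type*} [Fintype X] [Fintype A]
    (P : X → A → PMF X) (c : X × A → ℝ) (β O : ℝ) (Tb : ℕ) (v : X → ℝ) : X → ℝ :=
  fun x => ⨅ a : A, ⨅ Δt : {n : ℕ // n ∈ Finset.Icc 1 Tb},
    (cbar P c β x a Δt.val + β ^ Δt.val * (O + expect (skip P x a Δt.val) v))

/-- The evaluation operator of a stationary self-triggering policy `μ = (π, τ)`. -/
noncomputable def Tpol {X A : Type*} [Fintype X]
    (P : X → A → PMF X) (c : X × A → ℝ) (β O : ℝ)
    (π : X → A) (τ : X → ℕ) (v : X → ℝ) : X → ℝ :=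
  fun x => cbar P c β x (π x) (τ x) + β ^ (τ x) * (O + expect (skip P x (π x) (τ x)) v)

/-!
Since `T_O v ≤ T_μ v` for every admissible policy `μ`, the fixed point satisfies
`V_st ≤ T_μ V_st`, and a maximum principle for the discounted Markov operator `T_μ` upgrades this
to `V_st ≤ f^μ`. Conversely, the minimum defining `T_O` ranges over a finite nonempty set, so it is
attained pointwise by a greedy policy `μ*`, for which `T_μ* V_st = T_O V_st = V_st`; thus
`V_st = f^μ*` is the least of the achievable costs.
-/

section Expect

variable {X : Type*} [Fintype X]

lemma PMF.sum_toReal_eq_one (p : PMF X) : ∑ y, (p y).toReal = 1 := by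
  have h := p.tsum_coe
  rw [tsum_fintype] at h
  rw [← ENNReal.toReal_sum fun y _ => p.apply_ne_top y, h, ENNReal.toReal_one]

lemma expect_sub (p : PMF X) (u v : X → ℝ) :
    expect p (u - v) = expect p u - expect p v := by
  simp only [expect, Pi.sub_apply, mul_sub, Finset.sum_sub_distrib]

lemma expect_le_of_forall_le (p : PMF X) {u : X → ℝ} {M : ℝ} (h : ∀ y, u y ≤ M) :
    expect p u ≤ M :=
  calc expect p u ≤ ∑ y, (p y).toReal * M :=
        Finset.sum_le_sum fun y _ => mul_le_mul_of_nonneg_left (h y) ENNReal.toReal_nonneg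
    _ = M := by rw [← Finset.sum_mul, p.sum_toReal_eq_one, one_mul]

/-- Maximum principle for a discounted Markov operator. -/
lemma le_of_sub_le_mul_expect_sub (p : X → PMF X) {γ : X → ℝ}
    (hγ0 : ∀ x, 0 ≤ γ x) (hγ1 : ∀ x, γ x < 1) {u f : X → ℝ}
    (h : ∀ x, u x - f x ≤ γ x * expect (p x) (u - f)) : u ≤ f := by
  by_contra hneg
  obtain ⟨x, hx⟩ : ∃ x, f x < u x := by simpa [Pi.le_def] using hneg
  have : Nonempty X := ⟨x⟩
  obtain ⟨x0, hmax⟩ := Finite.exists_max (u - f)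
  have hpos : 0 < u x0 - f x0 := by
    have := hmax x
    simp only [Pi.sub_apply] at this
    linarith
  have hE : expect (p x0) (u - f) ≤ u x0 - f x0 := expect_le_of_forall_le _ hmax
  nlinarith [h x0, hγ0 x0, hγ1 x0]

end Expect

section SelfTriggered

variable {X A : Type*} [Fintype X] (P : X → A → PMF X) (c : X × A → ℝ) (β O : ℝ)

lemma le_of_le_Tpol_of_Tpol_eq (hβ0 : 0 ≤ β) (hβ1 : β < 1) {π : X → A} {τ : X → ℕ}
    (hτ : ∀ x, 1 ≤ τ x) {u f : X → ℝ} (hu : u ≤ Tpol P c β O π τ u)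
    (hf : Tpol P c β O π τ f = f) : u ≤ f := by
  refine le_of_sub_le_mul_expect_sub (fun x => skip P x (π x) (τ x))
    (fun x => pow_nonneg hβ0 (τ x))
    (fun x => pow_lt_one₀ hβ0 hβ1 (Nat.one_le_iff_ne_zero.mp (hτ x))) fun x => ?_
  calc u x - f x ≤ Tpol P c β O π τ u x - Tpol P c β O π τ f x := by
        rw [hf]; linarith [hu x]
    _ = β ^ τ x * expect (skip P x (π x) (τ x)) (u - f) := by
        rw [expect_sub]; simp only [Tpol]; ring

variable [Fintype A]

lemma TO_le_Tpol {Tb : ℕ} {π : X → A} {τ : X → ℕ} (hτ : ∀ x, 1 ≤ τ x ∧ τ x ≤ Tb)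
    (v : X → ℝ) : TO P c β O Tb v ≤ Tpol P c β O π τ v := fun x =>
  (ciInf_le (Finite.bddBelow_range _) (π x)).trans <|
    ciInf_le (Finite.bddBelow_range _)
      (⟨τ x, Finset.mem_Icc.mpr (hτ x)⟩ : {n // n ∈ Finset.Icc 1 Tb})

lemma exists_Tpol_eq_TO [Nonempty A] {Tb : ℕ} (hTb : 1 ≤ Tb) (v : X → ℝ) :
    ∃ (π : X → A) (τ : X → ℕ), (∀ x, 1 ≤ τ x ∧ τ x ≤ Tb) ∧
      Tpol P c β O π τ v = TO P c β O Tb v := by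
  have : Nonempty {n : ℕ // n ∈ Finset.Icc 1 Tb} := ⟨⟨1, Finset.mem_Icc.mpr ⟨le_rfl, hTb⟩⟩⟩
  have greedy : ∀ x, ∃ (a : A) (Δt : {n : ℕ // n ∈ Finset.Icc 1 Tb}),
      cbar P c β x a Δt + β ^ (Δt : ℕ) * (O + expect (skip P x a Δt) v) = TO P c β O Tb v x := by
    intro x
    obtain ⟨a, ha⟩ := exists_eq_ciInf_of_finite (f := fun a : A =>
      ⨅ Δt : {n : ℕ // n ∈ Finset.Icc 1 Tb},
        cbar P c β x a Δt + β ^ (Δt : ℕ) * (O + expect (skip P x a Δt) v))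
    obtain ⟨Δt, hΔt⟩ := exists_eq_ciInf_of_finite
      (f := fun Δt : {n : ℕ // n ∈ Finset.Icc 1 Tb} =>
        cbar P c β x a Δt + β ^ (Δt : ℕ) * (O + expect (skip P x a Δt) v))
    exact ⟨a, Δt, hΔt.trans ha⟩
  choose π τ hτ using greedy
  exact ⟨π, fun x => τ x, fun x => Finset.mem_Icc.mp (τ x).2, funext hτ⟩

end SelfTriggered

theorem Vst_eq_optimal_self_triggered_cost_general {X A : Type*} [Fintype X] [Fintype A] [Nonempty A]
    (P : X → A → PMF X) (c : X × A → ℝ)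
    (β : ℝ) (hβ0 : 0 ≤ β) (hβ1 : β < 1)
    (O : ℝ) (Tb : ℕ) (hTb : 1 ≤ Tb)
    (Vst : X → ℝ) (hVst : TO P c β O Tb Vst = Vst) :
    (∀ x : X, Vst x = sInf {r : ℝ | ∃ (π : X → A) (τ : X → ℕ),
      (∀ y : X, 1 ≤ τ y ∧ τ y ≤ Tb) ∧
      ∃ f : X → ℝ, Tpol P c β O π τ f = f ∧ r = f x}) ∧
    ∃ (π : X → A) (τ : X → ℕ), (∀ y : X, 1 ≤ τ y ∧ τ y ≤ Tb) ∧
      ∃ f : X → ℝ, Tpol P c β O π τ f = f ∧ ∀ x : X, f x = Vst x := by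
  obtain ⟨π, τ, hτ, hgreedy⟩ := exists_Tpol_eq_TO P c β O hTb Vst
  have hVst_le : ∀ (π : X → A) (τ : X → ℕ), (∀ y, 1 ≤ τ y ∧ τ y ≤ Tb) →
      ∀ f, Tpol P c β O π τ f = f → Vst ≤ f := fun π τ hτ f hf =>
    le_of_le_Tpol_of_Tpol_eq P c β O hβ0 hβ1 (fun y => (hτ y).1)
      (hVst.symm.le.trans (TO_le_Tpol P c β O hτ Vst)) hf
  have hfix : Tpol P c β O π τ Vst = Vst := hgreedy.trans hVst
  refine ⟨fun x => Eq.symm (IsLeast.csInf_eq ⟨⟨π, τ, hτ, Vst, hfix, rfl⟩, ?_⟩),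
    π, τ, hτ, Vst, hfix, fun _ => rfl⟩
  rintro r ⟨π', τ', hτ', f, hf, rfl⟩
  exact hVst_le π' τ' hτ' f hf x

theorem Vst_eq_optimal_self_triggered_cost {X A : Type*} [Fintype X] [Nonempty X] [Fintype A] [Nonempty A]
    (P : X → A → PMF X) (c : X × A → ℝ) (hc : ∀ (x : X) (a : A), 0 ≤ c (x, a))
    (β : ℝ) (hβ0 : 0 ≤ β) (hβ1 : β < 1)
    (O : ℝ) (hO : 0 ≤ O) (Tb : ℕ) (hTb : 1 ≤ Tb)
    (Vst : X → ℝ) (hVst : TO P c β O Tb Vst = Vst) :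
    (∀ x : X, Vst x = sInf {r : ℝ | ∃ (π : X → A) (τ : X → ℕ),
      (∀ y : X, 1 ≤ τ y ∧ τ y ≤ Tb) ∧
      ∃ f : X → ℝ, Tpol P c β O π τ f = f ∧ r = f x}) ∧
    ∃ (π : X → A) (τ : X → ℕ), (∀ y : X, 1 ≤ τ y ∧ τ y ≤ Tb) ∧
      ∃ f : X → ℝ, Tpol P c β O π τ f = f ∧ ∀ x : X, f x = Vst x :=
  Vst_eq_optimal_self_triggered_cost_general P c β hβ0 hβ1 O Tb hTb Vst hVst
end

section
/- (Lemma 1.) Let V be the unique fixed point of the classic Bellman operator T, let α ≥ 1, and let μ = (π, τ) be a stationary self-triggering policy whose zero-penalty evaluation fixed point is v^μ (the unique fixed point of the operator (T_μ^0 v)(x) = c̄(x, π(x), τ(x)) + β^{τ(x)} · E_{y∼P̄(x, π(x), τ(x))}[v(y)]). If for every x ∈ X, c̄(x, π(x), τ(x)) + α · β^{τ(x)} · E_{y∼P̄(x, π(x), τ(x))}[V(y)] ≤ α · V(x), then v^μ(x) ≤ α · V(x) for every x ∈ X. -/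
open scoped BigOperators

lemma pmf_sum_toReal {X : Type*} [Fintype X] (p : PMF X) : ∑ y, (p y).toReal = 1 := by
  have h := p.tsum_coe
  rw [tsum_fintype] at h
  rw [← ENNReal.toReal_sum (fun y _ => PMF.apply_ne_top p y), h, ENNReal.toReal_one]

theorem performance_guarantee_lemma {X A : Type*} [Fintype X] [Nonempty X] [Fintype A] [Nonempty A]
    (P : X → A → PMF X) (c : X × A → ℝ) (hc : ∀ (x : X) (a : A), 0 ≤ c (x, a))
    (β : ℝ) (hβ0 : 0 ≤ β) (hβ1 : β < 1)
    (Tb : ℕ) (hTb : 1 ≤ Tb)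
    (V : X → ℝ) (hV : bellman P c β V = V)
    (α : ℝ) (hα : 1 ≤ α)
    (π : X → A) (τ : X → ℕ) (hτ : ∀ x : X, 1 ≤ τ x ∧ τ x ≤ Tb)
    (vμ : X → ℝ) (hvμ : Tpol P c β 0 π τ vμ = vμ)
    (h : ∀ x : X, cbar P c β x (π x) (τ x) +
      α * β ^ (τ x) * expect (skip P x (π x) (τ x)) V ≤ α * V x) :
    ∀ x : X, vμ x ≤ α * V x := by
  classical
  obtain ⟨x0, -, hx0⟩ := Finset.exists_max_image (Finset.univ : Finset X)
    (fun x => vμ x - α * V x) ⟨Classical.arbitrary X, Finset.mem_univ _⟩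
  obtain ⟨M, hM⟩ : ∃ M, M = vμ x0 - α * V x0 := ⟨_, rfl⟩
  have hxall : ∀ x, vμ x ≤ α * V x + M := by
    intro x
    have := hx0 x (Finset.mem_univ x)
    rw [hM]; linarith
  have hMle : M ≤ 0 := by
    set p := skip P x0 (π x0) (τ x0) with hp
    have hsum : ∑ y, (p y).toReal = 1 := pmf_sum_toReal p
    set E := expect p V with hE
    set C := cbar P c β x0 (π x0) (τ x0) with hC
    set b := β ^ (τ x0) with hb
    have hEle : expect p vμ ≤ α * E + M := by
      have step : expect p vμ ≤ ∑ y, (p y).toReal * (α * V y + M) := by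
        apply Finset.sum_le_sum
        intro y _
        exact mul_le_mul_of_nonneg_left (hxall y) ENNReal.toReal_nonneg
      have : ∑ y, (p y).toReal * (α * V y + M)
          = α * (∑ y, (p y).toReal * V y) + M * ∑ y, (p y).toReal := by
        rw [Finset.mul_sum, Finset.mul_sum, ← Finset.sum_add_distrib]
        congr 1; ext y; ring
      rw [this, hsum] at step
      simpa [hE, expect] using step
    have hfix : vμ x0 = C + b * (0 + expect p vμ) := by
      conv_lhs => rw [← hvμ]
      rfl
    have hb0 : 0 ≤ b := pow_nonneg hβ0 _
    have hbβ : b ≤ β := by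
      calc b ≤ β ^ 1 := pow_le_pow_of_le_one hβ0 hβ1.le (hτ x0).1
      _ = β := pow_one β
    have key : vμ x0 ≤ α * V x0 + b * M := by
      have h1 := h x0
      have h2 : b * (0 + expect p vμ) ≤ b * (α * E + M) := by
        have := mul_le_mul_of_nonneg_left hEle hb0
        linarith [this]
      have h3 : b * (α * E + M) = α * b * E + b * M := by ring
      rw [← hC, ← hp, ← hE, ← hb] at h1
      linarith [hfix, h2]
    have hMb : M ≤ b * M := by rw [hM] at key ⊢; linarith
    by_contra hpos
    push_neg at hpos
    have : b * M ≤ β * M := mul_le_mul_of_nonneg_right hbβ hpos.le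
    nlinarith
  intro x
  have := hxall x
  linarith
end
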